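/- Let P be a constant skew-symmetric n×n real matrix and define the Moyal-type product on polynomials (or smooth functions): f ⋆ g := Σ_{k≥0} (ħᵏ/k!) Σ Pⁱ¹ʲ¹⋯Pⁱᵏʲᵏ (∂ᵢ₁⋯∂ᵢₖ f)(∂ⱼ₁⋯∂ⱼₖ g). Then ⋆ is associative: (f ⋆ g) ⋆ h = f ⋆ (g ⋆ h) as formal power series in ħ. -/

import Mathlib

set_option maxHeartbeats 1000000
set_option linter.unusedSectionVars false

open MvPolynomial

/-- Iterated partial derivative along the finite sequence of directions `is`. -/
noncomputable def pdSeq {n k : ℕ} (is : Fin k → Fin n)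
    (f : MvPolynomial (Fin n) ℝ) : MvPolynomial (Fin n) ℝ :=
  (List.ofFn is).foldr (fun i g => pderiv i g) f

/-- The Moyal product `f ⋆ g = ∑ₖ (ħᵏ/k!) Pⁱ¹ʲ¹⋯Pⁱᵏʲᵏ (∂ᵢ₁⋯∂ᵢₖ f)(∂ⱼ₁⋯∂ⱼₖ g)` of two
polynomials, as a formal power series in `ħ`. -/
noncomputable def moyal {n : ℕ} (P : Fin n → Fin n → ℝ)
    (f g : MvPolynomial (Fin n) ℝ) : PowerSeries (MvPolynomial (Fin n) ℝ) :=
  PowerSeries.mk fun k => (k.factorial : ℝ)⁻¹ •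
    ∑ is : Fin k → Fin n, ∑ js : Fin k → Fin n,
      (∏ m, P (is m) (js m)) • (pdSeq is f * pdSeq js g)

/-- The `ℝ[[ħ]]`-bilinear extension of the Moyal product to `A[[ħ]]`,
`A = ℝ[x₁,…,xₙ]`. -/
noncomputable def moyalPS {n : ℕ} (P : Fin n → Fin n → ℝ)
    (F G : PowerSeries (MvPolynomial (Fin n) ℝ)) : PowerSeries (MvPolynomial (Fin n) ℝ) :=
  PowerSeries.mk fun m => ∑ p ∈ Finset.HasAntidiagonal.antidiagonal m, ∑ q ∈ Finset.HasAntidiagonal.antidiagonal p.2,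
    PowerSeries.coeff q.2
      (moyal P (PowerSeries.coeff p.1 F) (PowerSeries.coeff q.1 G))

section ops
variable {n : ℕ} {V : Type*} [DecidableEq V]

noncomputable def pdE (v : V) : Module.End ℝ (MvPolynomial V ℝ) :=
  (pderiv v).toLinearMap

lemma pdE_apply (v : V) (p : MvPolynomial V ℝ) : pdE v p = pderiv v p := rfl

lemma pderiv_comm' (i j : V) (f : MvPolynomial V ℝ) :
    pderiv i (pderiv j f) = pderiv j (pderiv i f) := by
  induction f using MvPolynomial.induction_on' with
  | add p q hp hq => simp [map_add, hp, hq]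
  | monomial s a =>
    by_cases h : i = j
    · subst h; rfl
    · simp only [pderiv_monomial]
      have h1 : (s - Finsupp.single j 1 : _ →₀ ℕ) i = s i := by
        simp [Finsupp.sub_apply, Finsupp.single_apply, Ne.symm h]
      have h2 : (s - Finsupp.single i 1 : _ →₀ ℕ) j = s j := by
        simp [Finsupp.sub_apply, Finsupp.single_apply, h]
      rw [h1, h2]
      have h3 : s - Finsupp.single j 1 - Finsupp.single i 1
          = s - Finsupp.single i 1 - Finsupp.single j 1 := by
        ext k; simp [Finsupp.sub_apply]; omega
      rw [h3]; ring_nf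

lemma pdE_comm (u v : V) : Commute (pdE u) (pdE v) := by
  refine LinearMap.ext fun p => ?_
  simp [Module.End.mul_apply, pdE_apply, pderiv_comm']

lemma pderiv_rename_sum {σ τ : Type*} [Fintype σ] [DecidableEq σ] [DecidableEq τ]
    (f : σ → τ) (j : τ) (p : MvPolynomial σ ℝ) :
    pderiv j (rename f p) = ∑ s : σ, if f s = j then rename f (pderiv s p) else 0 := by
  induction p using MvPolynomial.induction_on with
  | C a => simp
  | add p q hp hq =>
    rw [map_add, map_add, hp, hq, ← Finset.sum_add_distrib]
    refine Finset.sum_congr rfl fun s _ => ?_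
    split <;> simp [map_add]
  | mul_X p s hp =>
    rw [map_mul, rename_X, pderiv_mul, hp]
    have key : ∀ s' : σ, (if f s' = j then rename f (pderiv s' (p * X s)) else 0)
        = (if f s' = j then rename f (pderiv s' p) else 0) * X (f s)
          + (if s' = s then (if f s = j then rename f p else 0) else 0) := by
      intro s'
      by_cases h : f s' = j
      · simp only [h, if_true, pderiv_mul, map_add, map_mul, rename_X]
        by_cases h2 : s' = s
        · subst h2; simp [pderiv_X_self, h]
        · simp [pderiv_X_of_ne (Ne.symm h2), h2]
      · simp only [h, if_false, zero_mul, zero_add]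
        by_cases h2 : s' = s
        · subst h2; simp [h]
        · simp [h2]
    rw [Finset.sum_congr rfl fun s' _ => key s', Finset.sum_add_distrib,
      ← Finset.sum_mul, Finset.sum_ite_eq' Finset.univ s]
    simp only [Finset.mem_univ, if_true]
    congr 1
    by_cases h : f s = j
    · simp [h, pderiv_X_self]
    · simp [h, pderiv_X_of_ne (fun hh => h hh.symm)]

noncomputable def opE (P : Fin n → Fin n → ℝ) (α β : Fin n → V) :
    Module.End ℝ (MvPolynomial V ℝ) :=
  ∑ i, ∑ j, P i j • (pdE (α i) * pdE (β j))

lemma opE_comm (P : Fin n → Fin n → ℝ) (α β γ δ : Fin n → V) :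
    Commute (opE P α β) (opE P γ δ) := by
  refine Commute.sum_left _ _ _ fun i _ => ?_
  refine Commute.sum_left _ _ _ fun j _ => ?_
  refine Commute.sum_right _ _ _ fun k _ => ?_
  refine Commute.sum_right _ _ _ fun l _ => ?_
  refine Commute.smul_left (Commute.smul_right ?_ _) _
  exact ((pdE_comm _ _).mul_right (pdE_comm _ _)).mul_left
    ((pdE_comm _ _).mul_right (pdE_comm _ _))
end ops

section expand
variable {n : ℕ}

noncomputable def t2 (f g : MvPolynomial (Fin n) ℝ) : MvPolynomial (Fin n ⊕ Fin n) ℝ :=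
  rename Sum.inl f * rename Sum.inr g

lemma pderiv_inl_t2 (i : Fin n) (f g : MvPolynomial (Fin n) ℝ) :
    pderiv (Sum.inl i) (t2 f g) = t2 (pderiv i f) g := by
  rw [t2, pderiv_mul, pderiv_rename Sum.inl_injective, pderiv_rename_sum Sum.inr]
  simp [t2]

lemma pderiv_inr_t2 (j : Fin n) (f g : MvPolynomial (Fin n) ℝ) :
    pderiv (Sum.inr j) (t2 f g) = t2 f (pderiv j g) := by
  rw [t2, pderiv_mul, pderiv_rename Sum.inr_injective, pderiv_rename_sum Sum.inl]
  simp [t2]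

lemma opE_t2 (P : Fin n → Fin n → ℝ) (f g : MvPolynomial (Fin n) ℝ) :
    opE P Sum.inl Sum.inr (t2 f g)
      = ∑ i, ∑ j, P i j • t2 (pderiv i f) (pderiv j g) := by
  rw [opE]
  simp only [LinearMap.sum_apply, LinearMap.smul_apply, Module.End.mul_apply, pdE_apply]
  simp [pderiv_inr_t2, pderiv_inl_t2]

lemma pdSeq_cons {k : ℕ} (i : Fin n) (is : Fin k → Fin n) (f : MvPolynomial (Fin n) ℝ) :
    pdSeq (Fin.cons i is) f = pderiv i (pdSeq is f) := by
  have : List.ofFn (Fin.cons i is : Fin (k+1) → Fin n) = i :: List.ofFn is := by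
    rw [List.ofFn_succ]; simp
  rw [pdSeq, this, List.foldr_cons, pdSeq]

lemma pdSeq_zero (is : Fin 0 → Fin n) (f : MvPolynomial (Fin n) ℝ) : pdSeq is f = f := by
  simp [pdSeq]

lemma sum_comm4 {M : Type*} [AddCommMonoid M] {α β γ δ : Type*}
    [Fintype α] [Fintype β] [Fintype γ] [Fintype δ] (f : α → β → γ → δ → M) :
    ∑ a, ∑ b, ∑ c, ∑ d, f a b c d = ∑ c, ∑ a, ∑ d, ∑ b, f a b c d :=
  calc ∑ a, ∑ b, ∑ c, ∑ d, f a b c d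
      = ∑ a, ∑ c, ∑ b, ∑ d, f a b c d :=
        Finset.sum_congr rfl fun a _ => Finset.sum_comm
    _ = ∑ c, ∑ a, ∑ b, ∑ d, f a b c d := Finset.sum_comm
    _ = ∑ c, ∑ a, ∑ d, ∑ b, f a b c d :=
        Finset.sum_congr rfl fun c _ => Finset.sum_congr rfl fun a _ => Finset.sum_comm

lemma opE_pow_t2 (P : Fin n → Fin n → ℝ) (k : ℕ) (f g : MvPolynomial (Fin n) ℝ) :
    (opE P Sum.inl Sum.inr ^ k) (t2 f g)
      = ∑ is : Fin k → Fin n, ∑ js : Fin k → Fin n,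
          (∏ m, P (is m) (js m)) • t2 (pdSeq is f) (pdSeq js g) := by
  induction k with
  | zero =>
    simp [pdSeq_zero]
  | succ k ih =>
    rw [pow_succ', Module.End.mul_apply, ih]
    have hL : (opE P Sum.inl Sum.inr) (∑ is : Fin k → Fin n, ∑ js : Fin k → Fin n,
          (∏ m, P (is m) (js m)) • t2 (pdSeq is f) (pdSeq js g))
        = ∑ is : Fin k → Fin n, ∑ js : Fin k → Fin n, ∑ i, ∑ j,
            ((∏ m, P (is m) (js m)) * P i j) •
              t2 (pderiv i (pdSeq is f)) (pderiv j (pdSeq js g)) := by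
      rw [map_sum]
      refine Finset.sum_congr rfl fun is _ => ?_
      rw [map_sum]
      refine Finset.sum_congr rfl fun js _ => ?_
      rw [map_smul, opE_t2, Finset.smul_sum]
      refine Finset.sum_congr rfl fun i _ => ?_
      rw [Finset.smul_sum]
      refine Finset.sum_congr rfl fun j _ => ?_
      rw [smul_smul]
    rw [hL]
    have hR : ∑ is : Fin (k+1) → Fin n, ∑ js : Fin (k+1) → Fin n,
          (∏ m, P (is m) (js m)) • t2 (pdSeq is f) (pdSeq js g)
        = ∑ p : Fin n × (Fin k → Fin n), ∑ q : Fin n × (Fin k → Fin n),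
            (∏ m, P ((Fin.cons p.1 p.2 : Fin (k+1) → Fin n) m) ((Fin.cons q.1 q.2 : Fin (k+1) → Fin n) m)) •
              t2 (pdSeq ((Fin.cons p.1 p.2 : Fin (k+1) → Fin n)) f) (pdSeq ((Fin.cons q.1 q.2 : Fin (k+1) → Fin n)) g) := by
      rw [← ((Fin.consEquiv (fun _ : Fin (k+1) => Fin n))).sum_comp]
      refine Finset.sum_congr rfl fun p _ => ?_
      rw [← ((Fin.consEquiv (fun _ : Fin (k+1) => Fin n))).sum_comp]
      refine Finset.sum_congr rfl fun q _ => ?_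
      simp [Fin.consEquiv]
    rw [hR]
    have key : ∀ (p q : Fin n × (Fin k → Fin n)),
        (∏ m, P ((Fin.cons p.1 p.2 : Fin (k+1) → Fin n) m) ((Fin.cons q.1 q.2 : Fin (k+1) → Fin n) m)) •
            t2 (pdSeq ((Fin.cons p.1 p.2 : Fin (k+1) → Fin n)) f) (pdSeq ((Fin.cons q.1 q.2 : Fin (k+1) → Fin n)) g)
        = ((∏ m, P (p.2 m) (q.2 m)) * P p.1 q.1) •
            t2 (pderiv p.1 (pdSeq p.2 f)) (pderiv q.1 (pdSeq q.2 g)) := by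
      intro p q
      rw [Fin.prod_univ_succ]
      simp [pdSeq_cons, mul_comm]
    simp only [key, Fintype.sum_prod_type]
    exact sum_comm4 _
end expand


section three
variable {n : ℕ}

/-- slot embeddings into the triple variable type -/
@[simp] def va (i : Fin n) : (Fin n ⊕ Fin n) ⊕ Fin n := Sum.inl (Sum.inl i)
@[simp] def vb (i : Fin n) : (Fin n ⊕ Fin n) ⊕ Fin n := Sum.inl (Sum.inr i)
@[simp] def vc (i : Fin n) : (Fin n ⊕ Fin n) ⊕ Fin n := Sum.inr i
@[simp] def phim : (Fin n ⊕ Fin n) ⊕ Fin n → Fin n ⊕ Fin n :=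
  Sum.elim (Sum.elim Sum.inl Sum.inl) Sum.inr
@[simp] def psim : (Fin n ⊕ Fin n) ⊕ Fin n → Fin n ⊕ Fin n :=
  Sum.elim (Sum.elim Sum.inl Sum.inr) Sum.inr
@[simp] def rhom : Fin n ⊕ Fin n → (Fin n ⊕ Fin n) ⊕ Fin n := Sum.elim vb vc

lemma pderiv_phim_inl (i : Fin n) (z : MvPolynomial ((Fin n ⊕ Fin n) ⊕ Fin n) ℝ) :
    pderiv (Sum.inl i) (rename phim z)
      = rename phim (pderiv (va i) z + pderiv (vb i) z) := by
  rw [pderiv_rename_sum, Fintype.sum_sum_type, Fintype.sum_sum_type]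
  simp [Finset.sum_ite_eq', map_add]

lemma pderiv_phim_inr (j : Fin n) (z : MvPolynomial ((Fin n ⊕ Fin n) ⊕ Fin n) ℝ) :
    pderiv (Sum.inr j) (rename phim z) = rename phim (pderiv (vc j) z) := by
  rw [pderiv_rename_sum, Fintype.sum_sum_type, Fintype.sum_sum_type]
  simp [Finset.sum_ite_eq']

lemma pderiv_psim_inl (i : Fin n) (z : MvPolynomial ((Fin n ⊕ Fin n) ⊕ Fin n) ℝ) :
    pderiv (Sum.inl i) (rename psim z) = rename psim (pderiv (va i) z) := by
  rw [pderiv_rename_sum, Fintype.sum_sum_type, Fintype.sum_sum_type]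
  simp [Finset.sum_ite_eq']

lemma pderiv_psim_inr (j : Fin n) (z : MvPolynomial ((Fin n ⊕ Fin n) ⊕ Fin n) ℝ) :
    pderiv (Sum.inr j) (rename psim z)
      = rename psim (pderiv (vb j) z + pderiv (vc j) z) := by
  rw [pderiv_rename_sum, Fintype.sum_sum_type, Fintype.sum_sum_type]
  simp [Finset.sum_ite_eq', map_add]

lemma opE_phim (P : Fin n → Fin n → ℝ) (z : MvPolynomial ((Fin n ⊕ Fin n) ⊕ Fin n) ℝ) :
    opE P Sum.inl Sum.inr (rename phim z)
      = rename phim ((opE P va vc + opE P vb vc) z) := by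
  simp only [opE, LinearMap.sum_apply, LinearMap.add_apply, LinearMap.smul_apply,
    Module.End.mul_apply, pdE_apply, pderiv_phim_inr, pderiv_phim_inl]
  simp only [map_add, map_sum, map_smul, smul_add, Finset.sum_add_distrib]

lemma opE_psim (P : Fin n → Fin n → ℝ) (z : MvPolynomial ((Fin n ⊕ Fin n) ⊕ Fin n) ℝ) :
    opE P Sum.inl Sum.inr (rename psim z)
      = rename psim ((opE P va vb + opE P va vc) z) := by
  simp only [opE, LinearMap.sum_apply, LinearMap.add_apply, LinearMap.smul_apply,
    Module.End.mul_apply, pdE_apply, pderiv_psim_inr, pderiv_psim_inl]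
  simp only [map_add, map_sum, map_smul, smul_add, Finset.sum_add_distrib]

lemma opE_pow_phim (P : Fin n → Fin n → ℝ) (t : ℕ)
    (z : MvPolynomial ((Fin n ⊕ Fin n) ⊕ Fin n) ℝ) :
    (opE P Sum.inl Sum.inr ^ t) (rename phim z)
      = rename phim (((opE P va vc + opE P vb vc) ^ t) z) := by
  induction t generalizing z with
  | zero => simp
  | succ t ih =>
    rw [pow_succ, Module.End.mul_apply, pow_succ, Module.End.mul_apply, opE_phim, ih]

lemma opE_pow_psim (P : Fin n → Fin n → ℝ) (t : ℕ)
    (z : MvPolynomial ((Fin n ⊕ Fin n) ⊕ Fin n) ℝ) :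
    (opE P Sum.inl Sum.inr ^ t) (rename psim z)
      = rename psim (((opE P va vb + opE P va vc) ^ t) z) := by
  induction t generalizing z with
  | zero => simp
  | succ t ih =>
    rw [pow_succ, Module.End.mul_apply, pow_succ, Module.End.mul_apply, opE_psim, ih]

end three


section bridge
variable {n : ℕ}

lemma va_inj : Function.Injective (va (n := n)) := by
  intro x y h; simpa [va] using h

lemma rhom_inj : Function.Injective (rhom (n := n)) := by
  intro x y h
  cases x <;> cases y <;> simp [rhom, va, vb, vc] at h <;> simp [h]

lemma pderiv_inl_rename_vc (u : Fin n ⊕ Fin n) (h : MvPolynomial (Fin n) ℝ) :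
    pderiv (Sum.inl u) (rename (vc (n := n)) h) = 0 := by
  rw [pderiv_rename_sum]; simp

lemma pderiv_vb_rename_va (i : Fin n) (f : MvPolynomial (Fin n) ℝ) :
    pderiv (vb i) (rename (va (n := n)) f) = 0 := by
  rw [pderiv_rename_sum]; simp

lemma pderiv_vc_rename_va (i : Fin n) (f : MvPolynomial (Fin n) ℝ) :
    pderiv (vc i) (rename (va (n := n)) f) = 0 := by
  rw [pderiv_rename_sum]; simp

lemma opE12_step (P : Fin n → Fin n → ℝ) (w : MvPolynomial (Fin n ⊕ Fin n) ℝ)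
    (h : MvPolynomial (Fin n) ℝ) :
    opE P va vb (rename Sum.inl w * rename vc h)
      = rename Sum.inl (opE P Sum.inl Sum.inr w) * rename vc h := by
  simp only [opE, LinearMap.sum_apply, LinearMap.smul_apply, Module.End.mul_apply, pdE_apply,
    map_sum, Finset.sum_mul]
  refine Finset.sum_congr rfl fun i _ => ?_
  refine Finset.sum_congr rfl fun j _ => ?_
  have h1 : pderiv (vb j) (rename (Sum.inl : (Fin n ⊕ Fin n) → _) w * rename vc h)
      = rename Sum.inl (pderiv (Sum.inr j) w) * rename vc h := by
    rw [pderiv_mul]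
    have hvb : vb j = Sum.inl (Sum.inr j : Fin n ⊕ Fin n) := rfl
    rw [hvb, pderiv_rename Sum.inl_injective, pderiv_inl_rename_vc]
    ring
  rw [h1, pderiv_mul]
  have hva : va i = Sum.inl (Sum.inl i : Fin n ⊕ Fin n) := rfl
  rw [hva, pderiv_rename Sum.inl_injective, pderiv_inl_rename_vc, mul_zero, add_zero,
    map_smul, smul_mul_assoc]

lemma opE12_pow (P : Fin n → Fin n → ℝ) (c : ℕ) (w : MvPolynomial (Fin n ⊕ Fin n) ℝ)
    (h : MvPolynomial (Fin n) ℝ) :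
    (opE P va vb ^ c) (rename Sum.inl w * rename vc h)
      = rename Sum.inl ((opE P Sum.inl Sum.inr ^ c) w) * rename vc h := by
  induction c generalizing w with
  | zero => simp
  | succ c ih =>
    rw [pow_succ, Module.End.mul_apply, pow_succ, Module.End.mul_apply, opE12_step, ih]

lemma opE23_step (P : Fin n → Fin n → ℝ) (f : MvPolynomial (Fin n) ℝ)
    (w : MvPolynomial (Fin n ⊕ Fin n) ℝ) :
    opE P vb vc (rename va f * rename rhom w)
      = rename va f * rename rhom (opE P Sum.inl Sum.inr w) := by
  simp only [opE, LinearMap.sum_apply, LinearMap.smul_apply, Module.End.mul_apply, pdE_apply,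
    map_sum, Finset.mul_sum]
  refine Finset.sum_congr rfl fun i _ => ?_
  refine Finset.sum_congr rfl fun j _ => ?_
  have h1 : pderiv (vc j) (rename (va (n := n)) f * rename rhom w)
      = rename va f * rename rhom (pderiv (Sum.inr j) w) := by
    rw [pderiv_mul, pderiv_vc_rename_va]
    have hvc : vc j = rhom (Sum.inr j : Fin n ⊕ Fin n) := rfl
    rw [hvc, pderiv_rename rhom_inj]
    ring
  rw [h1, pderiv_mul, pderiv_vb_rename_va, zero_mul, zero_add]
  have hvb : vb i = rhom (Sum.inl i : Fin n ⊕ Fin n) := rfl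
  rw [hvb, pderiv_rename rhom_inj, map_smul, mul_smul_comm]

lemma opE23_pow (P : Fin n → Fin n → ℝ) (c : ℕ) (f : MvPolynomial (Fin n) ℝ)
    (w : MvPolynomial (Fin n ⊕ Fin n) ℝ) :
    (opE P vb vc ^ c) (rename va f * rename rhom w)
      = rename va f * rename rhom ((opE P Sum.inl Sum.inr ^ c) w) := by
  induction c generalizing w with
  | zero => simp
  | succ c ih =>
    rw [pow_succ, Module.End.mul_apply, pow_succ, Module.End.mul_apply, opE23_step, ih]

lemma mu2_t2 (a b : MvPolynomial (Fin n) ℝ) :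
    rename (Sum.elim id id) (t2 a b) = a * b := by
  rw [t2, map_mul, rename_rename, rename_rename]
  have h1 : (Sum.elim id id ∘ Sum.inl : Fin n → Fin n) = id := rfl
  have h2 : (Sum.elim id id ∘ Sum.inr : Fin n → Fin n) = id := rfl
  rw [h1, h2, rename_id, AlgHom.id_apply, AlgHom.id_apply]

lemma coeff_moyal (P : Fin n → Fin n → ℝ) (k : ℕ) (f g : MvPolynomial (Fin n) ℝ) :
    PowerSeries.coeff k (moyal P f g)
      = (k.factorial : ℝ)⁻¹ •
          rename (Sum.elim id id) ((opE P Sum.inl Sum.inr ^ k) (t2 f g)) := by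
  rw [moyal, PowerSeries.coeff_mk, opE_pow_t2, map_sum]
  congr 1
  refine Finset.sum_congr rfl fun is _ => ?_
  rw [map_sum]
  refine Finset.sum_congr rfl fun js _ => ?_
  rw [map_smul, mu2_t2]

lemma phim_prod (w : MvPolynomial (Fin n ⊕ Fin n) ℝ) (h : MvPolynomial (Fin n) ℝ) :
    rename phim (rename Sum.inl w * rename vc h)
      = t2 (rename (Sum.elim id id) w) h := by
  rw [map_mul, rename_rename, rename_rename, t2, rename_rename]
  have h1 : (phim ∘ Sum.inl : (Fin n ⊕ Fin n) → Fin n ⊕ Fin n)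
      = Sum.inl ∘ Sum.elim id id := by funext x; cases x <;> rfl
  have h2 : (phim ∘ vc : Fin n → Fin n ⊕ Fin n) = Sum.inr := rfl
  rw [h1, h2, ← rename_rename]

lemma psim_prod (f : MvPolynomial (Fin n) ℝ) (w : MvPolynomial (Fin n ⊕ Fin n) ℝ) :
    rename psim (rename va f * rename rhom w)
      = t2 f (rename (Sum.elim id id) w) := by
  rw [map_mul, rename_rename, rename_rename, t2, rename_rename]
  have h1 : (psim ∘ va : Fin n → Fin n ⊕ Fin n) = Sum.inl := rfl
  have h2 : (psim ∘ rhom : (Fin n ⊕ Fin n) → Fin n ⊕ Fin n)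
      = Sum.inr ∘ Sum.elim id id := by funext x; cases x <;> rfl
  rw [h1, h2, ← rename_rename]

lemma mu2_phim (z : MvPolynomial ((Fin n ⊕ Fin n) ⊕ Fin n) ℝ) :
    rename (Sum.elim id id) (rename phim z)
      = rename (Sum.elim (Sum.elim id id) id) z := by
  rw [rename_rename]
  have heq : (Sum.elim id id ∘ phim : ((Fin n ⊕ Fin n) ⊕ Fin n) → Fin n)
      = Sum.elim (Sum.elim id id) id := by
    funext x
    rcases x with u | v
    · rcases u with _ | _ <;> rfl
    · rfl
  rw [heq]

lemma mu2_psim (z : MvPolynomial ((Fin n ⊕ Fin n) ⊕ Fin n) ℝ) :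
    rename (Sum.elim id id) (rename psim z)
      = rename (Sum.elim (Sum.elim id id) id) z := by
  rw [rename_rename]
  have heq : (Sum.elim id id ∘ psim : ((Fin n ⊕ Fin n) ⊕ Fin n) → Fin n)
      = Sum.elim (Sum.elim id id) id := by
    funext x
    rcases x with u | v
    · rcases u with _ | _ <;> rfl
    · rfl
  rw [heq]

noncomputable def zz (f g h : MvPolynomial (Fin n) ℝ) :
    MvPolynomial ((Fin n ⊕ Fin n) ⊕ Fin n) ℝ :=
  rename va f * rename vb g * rename vc h

lemma zz_eq1 (f g h : MvPolynomial (Fin n) ℝ) :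
    rename Sum.inl (t2 f g) * rename vc h = zz f g h := by
  rw [t2, map_mul, rename_rename, rename_rename, zz]
  rfl

lemma zz_eq2 (f g h : MvPolynomial (Fin n) ℝ) :
    rename va f * rename rhom (t2 g h) = zz f g h := by
  rw [t2, map_mul, rename_rename, rename_rename, zz]
  have h1 : (rhom ∘ Sum.inl : Fin n → _) = vb (n := n) := rfl
  have h2 : (rhom ∘ Sum.inr : Fin n → _) = vc (n := n) := rfl
  rw [h1, h2, mul_assoc]

lemma coeff_assocL (P : Fin n → Fin n → ℝ) (c t : ℕ) (f g h : MvPolynomial (Fin n) ℝ) :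
    PowerSeries.coeff t (moyal P (PowerSeries.coeff c (moyal P f g)) h)
      = ((c.factorial : ℝ)⁻¹ * (t.factorial : ℝ)⁻¹) •
          rename (Sum.elim (Sum.elim id id) id)
            ((((opE P va vc + opE P vb vc) ^ t) ((opE P va vb ^ c) (zz f g h)))) := by
  rw [coeff_moyal, coeff_moyal]
  have ht2 : t2 ((c.factorial : ℝ)⁻¹ •
        rename (Sum.elim id id) ((opE P Sum.inl Sum.inr ^ c) (t2 f g))) h
      = (c.factorial : ℝ)⁻¹ •
          rename phim ((opE P va vb ^ c) (zz f g h)) := by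
    rw [← zz_eq1, opE12_pow, phim_prod, t2, t2, map_smul, smul_mul_assoc]
    rfl
  rw [ht2, map_smul, map_smul, opE_pow_phim, mu2_phim, smul_smul, mul_comm]

lemma coeff_assocR (P : Fin n → Fin n → ℝ) (c t : ℕ) (f g h : MvPolynomial (Fin n) ℝ) :
    PowerSeries.coeff t (moyal P f (PowerSeries.coeff c (moyal P g h)))
      = ((c.factorial : ℝ)⁻¹ * (t.factorial : ℝ)⁻¹) •
          rename (Sum.elim (Sum.elim id id) id)
            ((((opE P va vb + opE P va vc) ^ t) ((opE P vb vc ^ c) (zz f g h)))) := by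
  rw [coeff_moyal, coeff_moyal]
  have ht2 : t2 f ((c.factorial : ℝ)⁻¹ •
        rename (Sum.elim id id) ((opE P Sum.inl Sum.inr ^ c) (t2 g h)))
      = (c.factorial : ℝ)⁻¹ •
          rename psim ((opE P vb vc ^ c) (zz f g h)) := by
    rw [← zz_eq2, opE23_pow, psim_prod, t2, t2, map_smul, mul_smul_comm]
    rfl
  rw [ht2, map_smul, map_smul, opE_pow_psim, mu2_psim, smul_smul, mul_comm]

end bridge


section core
variable {n : ℕ}

lemma fact_sum {E : Type*} [Ring E] [Algebra ℝ E] (X Y : E) (hXY : Commute X Y) (N : ℕ) :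
    ∑ p ∈ Finset.HasAntidiagonal.antidiagonal N,
        ((p.1.factorial : ℝ)⁻¹ * (p.2.factorial : ℝ)⁻¹) • (Y ^ p.2 * X ^ p.1)
      = (N.factorial : ℝ)⁻¹ • (X + Y) ^ N := by
  rw [Commute.add_pow' hXY, Finset.smul_sum]
  refine Finset.sum_congr rfl fun p hp => ?_
  have hmem : p.1 + p.2 = N := Finset.HasAntidiagonal.mem_antidiagonal.mp hp
  have hfact : (N.choose p.1 * p.1.factorial * p.2.factorial : ℕ) = N.factorial := by
    have h1 : p.1 ≤ N := by omega
    have := Nat.choose_mul_factorial_mul_factorial h1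
    have h2 : N - p.1 = p.2 := by omega
    rw [h2] at this
    exact this
  have hcast : ((N.choose p.1 : ℝ)) * p.1.factorial * p.2.factorial = N.factorial := by
    exact_mod_cast congrArg (Nat.cast : ℕ → ℝ) hfact
  rw [← (hXY.pow_pow p.1 p.2).eq, ← Nat.cast_smul_eq_nsmul ℝ, smul_smul]
  congr 1
  have ha : (p.1.factorial : ℝ) ≠ 0 := Nat.cast_ne_zero.mpr p.1.factorial_ne_zero
  have hb : (p.2.factorial : ℝ) ≠ 0 := Nat.cast_ne_zero.mpr p.2.factorial_ne_zero
  have hN : (N.factorial : ℝ) ≠ 0 := Nat.cast_ne_zero.mpr N.factorial_ne_zero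
  field_simp
  linear_combination -hcast

lemma core_assoc (P : Fin n → Fin n → ℝ) (N : ℕ) (f g h : MvPolynomial (Fin n) ℝ) :
    ∑ p ∈ Finset.HasAntidiagonal.antidiagonal N,
        PowerSeries.coeff p.2 (moyal P (PowerSeries.coeff p.1 (moyal P f g)) h)
      = ∑ p ∈ Finset.HasAntidiagonal.antidiagonal N,
          PowerSeries.coeff p.2 (moyal P f (PowerSeries.coeff p.1 (moyal P g h))) := by
  have hcL : Commute (opE P va vb) (opE P va vc + opE P vb vc) :=
    (opE_comm P va vb va vc).add_right (opE_comm P va vb vb vc)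
  have hcR : Commute (opE P vb vc) (opE P va vb + opE P va vc) :=
    ((opE_comm P va vb vb vc).symm).add_right ((opE_comm P va vc vb vc).symm)
  have hL : ∑ p ∈ Finset.HasAntidiagonal.antidiagonal N,
        PowerSeries.coeff p.2 (moyal P (PowerSeries.coeff p.1 (moyal P f g)) h)
      = rename (Sum.elim (Sum.elim id id) id)
          (((N.factorial : ℝ)⁻¹ •
            (opE P va vb + (opE P va vc + opE P vb vc)) ^ N) (zz f g h)) := by
    rw [← fact_sum _ _ hcL N]
    simp only [LinearMap.sum_apply, LinearMap.smul_apply, Module.End.mul_apply, map_sum, map_smul]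
    refine Finset.sum_congr rfl fun p _ => ?_
    rw [coeff_assocL]
  have hR : ∑ p ∈ Finset.HasAntidiagonal.antidiagonal N,
        PowerSeries.coeff p.2 (moyal P f (PowerSeries.coeff p.1 (moyal P g h)))
      = rename (Sum.elim (Sum.elim id id) id)
          (((N.factorial : ℝ)⁻¹ •
            (opE P vb vc + (opE P va vb + opE P va vc)) ^ N) (zz f g h)) := by
    rw [← fact_sum _ _ hcR N]
    simp only [LinearMap.sum_apply, LinearMap.smul_apply, Module.End.mul_apply, map_sum, map_smul]
    refine Finset.sum_congr rfl fun p _ => ?_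
    rw [coeff_assocR]
  rw [hL, hR]
  have : (opE P va vb + (opE P va vc + opE P vb vc))
      = (opE P vb vc + (opE P va vb + opE P va vc)) := by abel
  rw [this]

end core


section assemble
variable {n : ℕ}

lemma foldr_pderiv_sum (l : List (Fin n)) {ι : Type*} (s : Finset ι)
    (F : ι → MvPolynomial (Fin n) ℝ) :
    l.foldr (fun i g => pderiv i g) (∑ x ∈ s, F x)
      = ∑ x ∈ s, l.foldr (fun i g => pderiv i g) (F x) := by
  induction l with
  | nil => rfl
  | cons i l ih => simp only [List.foldr_cons, ih, map_sum]

lemma pdSeq_sum {k : ℕ} (is : Fin k → Fin n) {ι : Type*} (s : Finset ι)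
    (F : ι → MvPolynomial (Fin n) ℝ) :
    pdSeq is (∑ x ∈ s, F x) = ∑ x ∈ s, pdSeq is (F x) := by
  simp only [pdSeq]
  exact foldr_pderiv_sum _ s F

lemma coeff_moyal_sum_left (P : Fin n → Fin n → ℝ) {ι : Type*} (t : ℕ) (s : Finset ι)
    (u : ι → MvPolynomial (Fin n) ℝ) (h : MvPolynomial (Fin n) ℝ) :
    PowerSeries.coeff t (moyal P (∑ x ∈ s, u x) h)
      = ∑ x ∈ s, PowerSeries.coeff t (moyal P (u x) h) := by
  simp only [moyal, PowerSeries.coeff_mk]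
  rw [← Finset.smul_sum]
  congr 1
  have step : ∀ is : Fin t → Fin n, ∀ js : Fin t → Fin n,
      (∏ m, P (is m) (js m)) • (pdSeq is (∑ x ∈ s, u x) * pdSeq js h)
        = ∑ x ∈ s, (∏ m, P (is m) (js m)) • (pdSeq is (u x) * pdSeq js h) := by
    intro is js
    rw [pdSeq_sum, Finset.sum_mul, Finset.smul_sum]
  rw [Finset.sum_congr rfl fun is _ => Finset.sum_congr rfl fun js _ => step is js]
  rw [Finset.sum_congr rfl fun is _ => Finset.sum_comm, Finset.sum_comm]

lemma coeff_moyal_sum_right (P : Fin n → Fin n → ℝ) {ι : Type*} (t : ℕ) (s : Finset ι)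
    (f : MvPolynomial (Fin n) ℝ) (u : ι → MvPolynomial (Fin n) ℝ) :
    PowerSeries.coeff t (moyal P f (∑ x ∈ s, u x))
      = ∑ x ∈ s, PowerSeries.coeff t (moyal P f (u x)) := by
  simp only [moyal, PowerSeries.coeff_mk]
  rw [← Finset.smul_sum]
  congr 1
  have step : ∀ is : Fin t → Fin n, ∀ js : Fin t → Fin n,
      (∏ m, P (is m) (js m)) • (pdSeq is f * pdSeq js (∑ x ∈ s, u x))
        = ∑ x ∈ s, (∏ m, P (is m) (js m)) • (pdSeq is f * pdSeq js (u x)) := by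
    intro is js
    rw [pdSeq_sum, Finset.mul_sum, Finset.smul_sum]
  rw [Finset.sum_congr rfl fun is _ => Finset.sum_congr rfl fun js _ => step is js]
  rw [Finset.sum_congr rfl fun is _ => Finset.sum_comm, Finset.sum_comm]


lemma B1 {M : Type*} [AddCommMonoid M] (m : ℕ) (f : ℕ → ℕ → ℕ → M) :
    ∑ p ∈ Finset.HasAntidiagonal.antidiagonal m, ∑ q ∈ Finset.HasAntidiagonal.antidiagonal p.1, f q.1 q.2 p.2
      = ∑ p ∈ Finset.HasAntidiagonal.antidiagonal m, ∑ q ∈ Finset.HasAntidiagonal.antidiagonal p.2, f p.1 q.1 q.2 := by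
  rw [Finset.sum_sigma', Finset.sum_sigma']
  apply Finset.sum_nbij' (fun x => ⟨(x.2.1, x.2.2 + x.1.2), (x.2.2, x.1.2)⟩)
    (fun x => ⟨(x.1.1 + x.2.1, x.2.2), (x.1.1, x.2.1)⟩)
  case hi =>
    rintro ⟨⟨p1, p2⟩, ⟨q1, q2⟩⟩ h
    simp only [Finset.mem_sigma, Finset.HasAntidiagonal.mem_antidiagonal] at h ⊢
    exact ⟨by omega, trivial⟩
  case hj =>
    rintro ⟨⟨p1, p2⟩, ⟨q1, q2⟩⟩ h
    simp only [Finset.mem_sigma, Finset.HasAntidiagonal.mem_antidiagonal] at h ⊢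
    exact ⟨by omega, trivial⟩
  case left_neg =>
    rintro ⟨⟨p1, p2⟩, ⟨q1, q2⟩⟩ h
    simp only [Finset.mem_sigma, Finset.HasAntidiagonal.mem_antidiagonal] at h
    obtain ⟨h1, h2⟩ := h
    subst h2; rfl
  case right_neg =>
    rintro ⟨⟨p1, p2⟩, ⟨q1, q2⟩⟩ h
    simp only [Finset.mem_sigma, Finset.HasAntidiagonal.mem_antidiagonal] at h
    obtain ⟨h1, h2⟩ := h
    subst h2; rfl
  case h =>
    rintro ⟨⟨p1, p2⟩, ⟨q1, q2⟩⟩ h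
    rfl

lemma B3 {M : Type*} [AddCommMonoid M] (m : ℕ) (f : ℕ → ℕ → ℕ → ℕ → M) :
    ∑ p ∈ Finset.HasAntidiagonal.antidiagonal m, ∑ q ∈ Finset.HasAntidiagonal.antidiagonal p.1,
        ∑ r ∈ Finset.HasAntidiagonal.antidiagonal p.2, f q.1 q.2 r.1 r.2
      = ∑ p ∈ Finset.HasAntidiagonal.antidiagonal m, ∑ q ∈ Finset.HasAntidiagonal.antidiagonal p.1,
          ∑ r ∈ Finset.HasAntidiagonal.antidiagonal p.2, f q.1 r.1 q.2 r.2 := by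
  rw [Finset.sum_sigma', Finset.sum_sigma', Finset.sum_sigma', Finset.sum_sigma']
  apply Finset.sum_nbij'
    (fun x => ⟨⟨(x.1.2.1 + x.2.1, x.1.2.2 + x.2.2), (x.1.2.1, x.2.1)⟩, (x.1.2.2, x.2.2)⟩)
    (fun x => ⟨⟨(x.1.2.1 + x.2.1, x.1.2.2 + x.2.2), (x.1.2.1, x.2.1)⟩, (x.1.2.2, x.2.2)⟩)
  case hi =>
    rintro ⟨⟨⟨p1, p2⟩, ⟨q1, q2⟩⟩, ⟨r1, r2⟩⟩ h
    simp only [Finset.mem_sigma, Finset.HasAntidiagonal.mem_antidiagonal] at h ⊢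
    exact ⟨⟨by omega, trivial⟩, trivial⟩
  case hj =>
    rintro ⟨⟨⟨p1, p2⟩, ⟨q1, q2⟩⟩, ⟨r1, r2⟩⟩ h
    simp only [Finset.mem_sigma, Finset.HasAntidiagonal.mem_antidiagonal] at h ⊢
    exact ⟨⟨by omega, trivial⟩, trivial⟩
  case left_neg =>
    rintro ⟨⟨⟨p1, p2⟩, ⟨q1, q2⟩⟩, ⟨r1, r2⟩⟩ h
    simp only [Finset.mem_sigma, Finset.HasAntidiagonal.mem_antidiagonal] at h
    obtain ⟨⟨h1, h2⟩, h3⟩ := h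
    subst h2; subst h3; rfl
  case right_neg =>
    rintro ⟨⟨⟨p1, p2⟩, ⟨q1, q2⟩⟩, ⟨r1, r2⟩⟩ h
    simp only [Finset.mem_sigma, Finset.HasAntidiagonal.mem_antidiagonal] at h
    obtain ⟨⟨h1, h2⟩, h3⟩ := h
    subst h2; subst h3; rfl
  case h =>
    rintro ⟨⟨⟨p1, p2⟩, ⟨q1, q2⟩⟩, ⟨r1, r2⟩⟩ h
    rfl


noncomputable def TT (P : Fin n → Fin n → ℝ)
    (F G H : PowerSeries (MvPolynomial (Fin n) ℝ)) (a b s c t : ℕ) :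
    MvPolynomial (Fin n) ℝ :=
  PowerSeries.coeff t (moyal P
    (PowerSeries.coeff c (moyal P (PowerSeries.coeff a F) (PowerSeries.coeff b G)))
    (PowerSeries.coeff s H))

noncomputable def TT' (P : Fin n → Fin n → ℝ)
    (F G H : PowerSeries (MvPolynomial (Fin n) ℝ)) (a b s c t : ℕ) :
    MvPolynomial (Fin n) ℝ :=
  PowerSeries.coeff t (moyal P (PowerSeries.coeff a F)
    (PowerSeries.coeff c (moyal P (PowerSeries.coeff b G) (PowerSeries.coeff s H))))

end assemble

/-- For a constant skew-symmetric matrix `P`, the Moyal product is associative. -/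
theorem moyal_product_associative {n : ℕ} (P : Fin n → Fin n → ℝ)
    (hskew : ∀ i j, P i j = - P j i) :
    ∀ F G H : PowerSeries (MvPolynomial (Fin n) ℝ),
      moyalPS P (moyalPS P F G) H = moyalPS P F (moyalPS P G H) := by
  intro F G H
  refine PowerSeries.ext fun m => ?_
  have hL : PowerSeries.coeff m (moyalPS P (moyalPS P F G) H)
      = ∑ p ∈ Finset.HasAntidiagonal.antidiagonal m, ∑ q ∈ Finset.HasAntidiagonal.antidiagonal p.2,
          ∑ r ∈ Finset.HasAntidiagonal.antidiagonal p.1, ∑ u ∈ Finset.HasAntidiagonal.antidiagonal r.2,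
            TT P F G H r.1 u.1 q.1 u.2 q.2 := by
    simp only [moyalPS, PowerSeries.coeff_mk, coeff_moyal_sum_left, TT]
  have hR : PowerSeries.coeff m (moyalPS P F (moyalPS P G H))
      = ∑ p ∈ Finset.HasAntidiagonal.antidiagonal m, ∑ q ∈ Finset.HasAntidiagonal.antidiagonal p.2,
          ∑ r ∈ Finset.HasAntidiagonal.antidiagonal q.1, ∑ u ∈ Finset.HasAntidiagonal.antidiagonal r.2,
            TT' P F G H p.1 r.1 u.1 u.2 q.2 := by
    simp only [moyalPS, PowerSeries.coeff_mk, coeff_moyal_sum_right, TT']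
  have hcanL : ∑ p ∈ Finset.HasAntidiagonal.antidiagonal m, ∑ q ∈ Finset.HasAntidiagonal.antidiagonal p.2,
          ∑ r ∈ Finset.HasAntidiagonal.antidiagonal p.1, ∑ u ∈ Finset.HasAntidiagonal.antidiagonal r.2,
            TT P F G H r.1 u.1 q.1 u.2 q.2
      = ∑ x ∈ Finset.HasAntidiagonal.antidiagonal m, ∑ y ∈ Finset.HasAntidiagonal.antidiagonal x.1,
          ∑ z ∈ Finset.HasAntidiagonal.antidiagonal y.2, ∑ w ∈ Finset.HasAntidiagonal.antidiagonal x.2,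
            TT P F G H y.1 z.1 z.2 w.1 w.2 :=
    calc ∑ p ∈ Finset.HasAntidiagonal.antidiagonal m, ∑ q ∈ Finset.HasAntidiagonal.antidiagonal p.2,
          ∑ r ∈ Finset.HasAntidiagonal.antidiagonal p.1, ∑ u ∈ Finset.HasAntidiagonal.antidiagonal r.2,
            TT P F G H r.1 u.1 q.1 u.2 q.2
        = ∑ p ∈ Finset.HasAntidiagonal.antidiagonal m, ∑ q ∈ Finset.HasAntidiagonal.antidiagonal p.2,
            ∑ r ∈ Finset.HasAntidiagonal.antidiagonal p.1, ∑ u ∈ Finset.HasAntidiagonal.antidiagonal r.1,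
              TT P F G H u.1 u.2 q.1 r.2 q.2 :=
          Finset.sum_congr rfl fun p _ => Finset.sum_congr rfl fun q _ =>
            (B1 p.1 (fun a b c => TT P F G H a b q.1 c q.2)).symm
      _ = ∑ p ∈ Finset.HasAntidiagonal.antidiagonal m, ∑ r ∈ Finset.HasAntidiagonal.antidiagonal p.1,
            ∑ q ∈ Finset.HasAntidiagonal.antidiagonal p.2, ∑ u ∈ Finset.HasAntidiagonal.antidiagonal r.1,
              TT P F G H u.1 u.2 q.1 r.2 q.2 :=
          Finset.sum_congr rfl fun p _ => Finset.sum_comm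
      _ = ∑ p ∈ Finset.HasAntidiagonal.antidiagonal m, ∑ y ∈ Finset.HasAntidiagonal.antidiagonal p.1,
            ∑ w ∈ Finset.HasAntidiagonal.antidiagonal p.2, ∑ u ∈ Finset.HasAntidiagonal.antidiagonal y.1,
              TT P F G H u.1 u.2 y.2 w.1 w.2 :=
          B3 m (fun w x y z => ∑ u ∈ Finset.HasAntidiagonal.antidiagonal w, TT P F G H u.1 u.2 y x z)
      _ = ∑ p ∈ Finset.HasAntidiagonal.antidiagonal m, ∑ y ∈ Finset.HasAntidiagonal.antidiagonal p.1,
            ∑ u ∈ Finset.HasAntidiagonal.antidiagonal y.1, ∑ w ∈ Finset.HasAntidiagonal.antidiagonal p.2,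
              TT P F G H u.1 u.2 y.2 w.1 w.2 :=
          Finset.sum_congr rfl fun p _ => Finset.sum_congr rfl fun y _ => Finset.sum_comm
      _ = ∑ x ∈ Finset.HasAntidiagonal.antidiagonal m, ∑ y ∈ Finset.HasAntidiagonal.antidiagonal x.1,
            ∑ z ∈ Finset.HasAntidiagonal.antidiagonal y.2, ∑ w ∈ Finset.HasAntidiagonal.antidiagonal x.2,
              TT P F G H y.1 z.1 z.2 w.1 w.2 :=
          Finset.sum_congr rfl fun p _ =>
            B1 p.1 (fun a b s => ∑ w ∈ Finset.HasAntidiagonal.antidiagonal p.2, TT P F G H a b s w.1 w.2)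
  have hcanR : ∑ p ∈ Finset.HasAntidiagonal.antidiagonal m, ∑ q ∈ Finset.HasAntidiagonal.antidiagonal p.2,
          ∑ r ∈ Finset.HasAntidiagonal.antidiagonal q.1, ∑ u ∈ Finset.HasAntidiagonal.antidiagonal r.2,
            TT' P F G H p.1 r.1 u.1 u.2 q.2
      = ∑ x ∈ Finset.HasAntidiagonal.antidiagonal m, ∑ y ∈ Finset.HasAntidiagonal.antidiagonal x.1,
          ∑ z ∈ Finset.HasAntidiagonal.antidiagonal y.2, ∑ w ∈ Finset.HasAntidiagonal.antidiagonal x.2,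
            TT' P F G H y.1 z.1 z.2 w.1 w.2 :=
    calc ∑ p ∈ Finset.HasAntidiagonal.antidiagonal m, ∑ q ∈ Finset.HasAntidiagonal.antidiagonal p.2,
          ∑ r ∈ Finset.HasAntidiagonal.antidiagonal q.1, ∑ u ∈ Finset.HasAntidiagonal.antidiagonal r.2,
            TT' P F G H p.1 r.1 u.1 u.2 q.2
        = ∑ p ∈ Finset.HasAntidiagonal.antidiagonal m, ∑ q ∈ Finset.HasAntidiagonal.antidiagonal p.2,
            ∑ r ∈ Finset.HasAntidiagonal.antidiagonal q.1, ∑ u ∈ Finset.HasAntidiagonal.antidiagonal r.1,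
              TT' P F G H p.1 u.1 u.2 r.2 q.2 :=
          Finset.sum_congr rfl fun p _ => Finset.sum_congr rfl fun q _ =>
            (B1 q.1 (fun b sv c => TT' P F G H p.1 b sv c q.2)).symm
      _ = ∑ p ∈ Finset.HasAntidiagonal.antidiagonal m, ∑ q ∈ Finset.HasAntidiagonal.antidiagonal p.2,
            ∑ w ∈ Finset.HasAntidiagonal.antidiagonal q.2, ∑ u ∈ Finset.HasAntidiagonal.antidiagonal q.1,
              TT' P F G H p.1 u.1 u.2 w.1 w.2 :=
          Finset.sum_congr rfl fun p _ =>
            B1 p.2 (fun x y z => ∑ u ∈ Finset.HasAntidiagonal.antidiagonal x, TT' P F G H p.1 u.1 u.2 y z)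
      _ = ∑ x ∈ Finset.HasAntidiagonal.antidiagonal m, ∑ y ∈ Finset.HasAntidiagonal.antidiagonal x.1,
            ∑ w ∈ Finset.HasAntidiagonal.antidiagonal x.2, ∑ u ∈ Finset.HasAntidiagonal.antidiagonal y.2,
              TT' P F G H y.1 u.1 u.2 w.1 w.2 :=
          (B1 m (fun a x y => ∑ w ∈ Finset.HasAntidiagonal.antidiagonal y, ∑ u ∈ Finset.HasAntidiagonal.antidiagonal x,
            TT' P F G H a u.1 u.2 w.1 w.2)).symm
      _ = ∑ x ∈ Finset.HasAntidiagonal.antidiagonal m, ∑ y ∈ Finset.HasAntidiagonal.antidiagonal x.1,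
            ∑ z ∈ Finset.HasAntidiagonal.antidiagonal y.2, ∑ w ∈ Finset.HasAntidiagonal.antidiagonal x.2,
              TT' P F G H y.1 z.1 z.2 w.1 w.2 :=
          Finset.sum_congr rfl fun x _ => Finset.sum_congr rfl fun y _ => Finset.sum_comm
  have hcore : ∑ x ∈ Finset.HasAntidiagonal.antidiagonal m, ∑ y ∈ Finset.HasAntidiagonal.antidiagonal x.1,
          ∑ z ∈ Finset.HasAntidiagonal.antidiagonal y.2, ∑ w ∈ Finset.HasAntidiagonal.antidiagonal x.2,
            TT P F G H y.1 z.1 z.2 w.1 w.2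
      = ∑ x ∈ Finset.HasAntidiagonal.antidiagonal m, ∑ y ∈ Finset.HasAntidiagonal.antidiagonal x.1,
          ∑ z ∈ Finset.HasAntidiagonal.antidiagonal y.2, ∑ w ∈ Finset.HasAntidiagonal.antidiagonal x.2,
            TT' P F G H y.1 z.1 z.2 w.1 w.2 := by
    refine Finset.sum_congr rfl fun x _ => Finset.sum_congr rfl fun y _ =>
      Finset.sum_congr rfl fun z _ => ?_
    have := core_assoc P x.2 (PowerSeries.coeff y.1 F) (PowerSeries.coeff z.1 G)
      (PowerSeries.coeff z.2 H)
    simpa [TT, TT'] using this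
  rw [hL, hR, hcanL, hcanR, hcore]
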